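/- Rebound phase has nonnegative velocity (Step 2 of the proof of Theorem 3.3): Under the assumptions of Theorem 3.3 (hypotheses (B1), (B2), (B4), (D1), (D2), (D4), (D5), (D6), initial data ξ₀ = ξ̇₀ = 0, h₀ > 0, ḣ₀ < 0, y⁻ < −δ₂), let μ_n → 0⁺ with global solutions (h_n, ξ_n) of (gf), and suppose ξ_n converges uniformly on compact sets to the solution ξ of ξ̈ + a·b(ξ) = 0, ξ(t₀) = 0, ξ̇(t₀) = −ḣ₀, where t₀ := −h₀/ḣ₀, and that h_n(t) → max{0, h₀ + ḣ₀·t} pointwise. Let t₁ < t₂ be such that ξ < 0 on (t₁, t₂). Then for every ε > 0 with 6ε < t₂ − t₁ there exists N such that for all n ≥ N one has ḣ_n(t) ≥ 0 for all t ∈ (t₁ + 3ε, t₂ − 3ε). -/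

import Mathlib

open Real Filter Set MeasureTheory Metric

noncomputable section

/-- The potential `B(y) = ∫₀^y b(w) dw` of the elastic response `b`. -/
def potB (b : ℝ → ℝ) (y : ℝ) : ℝ := ∫ w in (0:ℝ)..y, b w

/-- (B1): `b` is locally Lipschitz continuous. -/
def HypB1 (b : ℝ → ℝ) : Prop := LocallyLipschitz b

/-- (B2): the potential `B` is coercive, i.e. `B(y) → ∞` as `|y| → ∞`. -/
def HypB2 (b : ℝ → ℝ) : Prop := Tendsto (potB b) (cocompact ℝ) atTop

/-- (B3): the potential `B` is nonnegative. -/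
def HypB3 (b : ℝ → ℝ) : Prop := ∀ y : ℝ, 0 ≤ potB b y

/-- (B4): `b(y)·y > 0` for all `y ≠ 0`. -/
def HypB4 (b : ℝ → ℝ) : Prop := ∀ y : ℝ, y ≠ 0 → 0 < b y * y

/-- The drag factor `𝒟` maps `(0,∞) × ℝ` into `(0,∞)`. -/
def HypDpos (D : ℝ → ℝ → ℝ) : Prop := ∀ x ξ : ℝ, 0 < x → 0 < D x ξ

/-- (D1): `𝒟` is locally Lipschitz continuous on `(0,∞) × ℝ`. -/
def HypD1 (D : ℝ → ℝ → ℝ) : Prop :=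
  ∀ p : ℝ × ℝ, 0 < p.1 → ∃ ε > 0, ∃ L : NNReal,
    LipschitzOnWith L (fun q : ℝ × ℝ => D q.1 q.2)
      (Metric.ball p ε ∩ {q : ℝ × ℝ | 0 < q.1})

/-- (D2): singular lower bound `𝒟(h,ξ) ≥ c·h^(−α)`, uniformly in `ξ`. -/
def HypD2 (D : ℝ → ℝ → ℝ) (c α : ℝ) : Prop :=
  0 < c ∧ 1 ≤ α ∧ ∀ x ξ : ℝ, 0 < x → c * x ^ (-α) ≤ D x ξ

/-- (D3): `𝒟(h,ξ) = g(h)·h^(−α)` with `g : (0,∞) → [C₁,C₂]` locally Lipschitz. -/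
def HypD3 (D : ℝ → ℝ → ℝ) (g : ℝ → ℝ) (C₁ C₂ α : ℝ) : Prop :=
  0 < C₁ ∧ C₁ ≤ C₂ ∧ 1 ≤ α ∧
  (∀ x : ℝ, 0 < x → ∃ ε > 0, ∃ L : NNReal,
      LipschitzOnWith L g (Metric.ball x ε ∩ Set.Ioi 0)) ∧
  (∀ x : ℝ, 0 < x → g x ∈ Set.Icc C₁ C₂) ∧
  (∀ x ξ : ℝ, 0 < x → D x ξ = g x * x ^ (-α))

/-- (D4): `ξ ↦ 𝒟(h,ξ)` is nondecreasing for every `h > 0`. -/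
def HypD4 (D : ℝ → ℝ → ℝ) : Prop :=
  ∀ x : ℝ, 0 < x → ∀ ξ₁ ξ₂ : ℝ, ξ₁ ≤ ξ₂ → D x ξ₁ ≤ D x ξ₂

/-- (D5): `𝒟(h,−δ₁) ≥ c₁·h^(−γ₁)` with `γ₁ ≥ α`. -/
def HypD5 (D : ℝ → ℝ → ℝ) (α δ₁ c₁ γ₁ : ℝ) : Prop :=
  0 < δ₁ ∧ 0 < c₁ ∧ α ≤ γ₁ ∧ ∀ x : ℝ, 0 < x → c₁ * x ^ (-γ₁) ≤ D x (-δ₁)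

/-- (D6): `𝒟(h,−δ₂) ≤ γ(h)·h^(−γ₁)` with `∫₀^h γ(y)/y dy → 0` as `h → 0⁺`. -/
def HypD6 (D : ℝ → ℝ → ℝ) (γ₁ δ₂ : ℝ) (γfun : ℝ → ℝ) : Prop :=
  0 < δ₂ ∧ (∀ y : ℝ, 0 < y → 0 ≤ γfun y) ∧
  Tendsto (fun x : ℝ => ∫ y in (0:ℝ)..x, γfun y / y)
    (nhdsWithin 0 (Set.Ioi 0)) (nhds 0) ∧
  ∀ x : ℝ, 0 < x → D x (-δ₂) ≤ γfun x * x ^ (-γ₁)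

/-- A global solution of the reduced system (gf) on `[0,∞)`:
`h, ξ` twice differentiable, `h > 0`, satisfying
`ḧ − ξ̈ = a·b(ξ)` and `ḧ = −b(ξ) − μ·𝒟(h,ξ)·ḣ`, with the given initial data. -/
def IsGlobalSolution (a μ : ℝ) (b : ℝ → ℝ) (D : ℝ → ℝ → ℝ)
    (h0 hd0 ξ0 ξd0 : ℝ) (h ξ : ℝ → ℝ) : Prop :=
  (∀ t : ℝ, 0 ≤ t → 0 < h t) ∧
  (∀ t : ℝ, 0 ≤ t → DifferentiableAt ℝ h t ∧ DifferentiableAt ℝ (deriv h) t ∧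
    DifferentiableAt ℝ ξ t ∧ DifferentiableAt ℝ (deriv ξ) t) ∧
  (∀ t : ℝ, 0 ≤ t → deriv (deriv h) t - deriv (deriv ξ) t = a * b (ξ t)) ∧
  (∀ t : ℝ, 0 ≤ t →
    deriv (deriv h) t = - b (ξ t) - μ * D (h t) (ξ t) * deriv h t) ∧
  h 0 = h0 ∧ deriv h 0 = hd0 ∧ ξ 0 = ξ0 ∧ deriv ξ 0 = ξd0

/-- A solution of the nonlinear oscillator `ξ̈ + a·b(ξ) = 0` on `(t₀,∞)`
with `ξ(t₀) = 0` and `ξ̇(t₀) = v₀` (right derivative at `t₀`). -/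
def IsOscSolution (a t₀ v₀ : ℝ) (b : ℝ → ℝ) (ψ : ℝ → ℝ) : Prop :=
  ψ t₀ = 0 ∧
  HasDerivWithinAt ψ v₀ (Set.Ici t₀) t₀ ∧
  ContinuousOn ψ (Set.Ici t₀) ∧
  Tendsto (deriv ψ) (nhdsWithin t₀ (Set.Ioi t₀)) (nhds v₀) ∧
  ∀ t : ℝ, t₀ < t → DifferentiableAt ℝ ψ t ∧ DifferentiableAt ℝ (deriv ψ) t ∧
    deriv (deriv ψ) t + a * b (ψ t) = 0

/-!
Fix `a₁ = t₁ + ε`. On `[a₁, t₂ − 3ε]` the limit `ξ` is negative, so by uniform convergence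
`b(ξₙ) ≤ −β < 0` there for large `n`, while `hₙ(a₁) → 0` because `a₁` lies after the impact time
`t₀`. Where `ḣₙ < 0` the drag term `−μ𝒟ḣₙ` is positive, so `ḧₙ ≥ −b(ξₙ) ≥ β`. If `ḣₙ(t) < 0`,
then `ḣₙ < 0` on all of `[a₁, t]` (after its last nonnegative value `ḣₙ` would increase), hence
`hₙ(t) ≤ hₙ(a₁) − β(t − a₁)²/2 < 0`, contradicting `hₙ > 0`.
-/

theorem neg_on_Icc_of_neg_right_of_deriv_pos {v : ℝ → ℝ} {a t : ℝ}
    (hv : ContinuousOn v (Icc a t)) (hderiv : ∀ s ∈ Ioo a t, v s < 0 → 0 < deriv v s)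
    (ht : v t < 0) : ∀ s ∈ Icc a t, v s < 0 := by
  by_contra! hex
  set S := Icc a t ∩ v ⁻¹' Ici 0
  have hS : IsCompact S := isCompact_Icc.of_isClosed_subset
    (hv.preimage_isClosed_of_isClosed isClosed_Icc isClosed_Ici) inter_subset_left
  obtain ⟨⟨has₁, hs₁t⟩, hvs₁⟩ : sSup S ∈ S := hS.sSup_mem hex
  set s₁ := sSup S
  have hvs₁ : 0 ≤ v s₁ := hvs₁
  have hlt : s₁ < t := lt_of_le_of_ne hs₁t fun h => by rw [h] at hvs₁; linarith
  have hneg : ∀ s ∈ Ioc s₁ t, v s < 0 := fun s hs => by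
    by_contra! hvs
    exact not_le.2 hs.1 (le_csSup hS.bddAbove ⟨⟨has₁.trans hs.1.le, hs.2⟩, hvs⟩)
  have hmono : StrictMonoOn v (Icc s₁ t) :=
    strictMonoOn_of_deriv_pos (convex_Icc _ _) (hv.mono (Icc_subset_Icc has₁ le_rfl))
      fun s hs => by
        rw [interior_Icc] at hs
        exact hderiv s ⟨has₁.trans_lt hs.1, hs.2⟩ (hneg s ⟨hs.1, hs.2.le⟩)
  linarith [hmono ⟨le_rfl, hlt.le⟩ ⟨hlt.le, le_rfl⟩ hlt]

theorem le_sub_half_mul_sq_of_le_deriv_deriv {f : ℝ → ℝ} {a t β : ℝ} (hat : a ≤ t)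
    (hf : DifferentiableOn ℝ f (Icc a t)) (hf' : DifferentiableOn ℝ (deriv f) (Icc a t))
    (hβ : ∀ s ∈ Ioo a t, β ≤ deriv (deriv f) s) (ht : deriv f t ≤ 0) :
    f t ≤ f a - β / 2 * (t - a) ^ 2 := by
  have hv : ∀ s ∈ Icc a t, deriv f s ≤ deriv f t - β * (t - s) := fun s hs => by
    have := (convex_Icc a t).mul_sub_le_image_sub_of_le_deriv hf'.continuousOn
      (hf'.mono interior_subset) (by simpa only [interior_Icc] using hβ) s hs t ⟨hat, le_rfl⟩ hs.2
    linarith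
  have hanti : AntitoneOn (fun s => f s - β / 2 * (t - s) ^ 2) (Icc a t) := by
    apply antitoneOn_of_deriv_nonpos (convex_Icc a t)
    · exact hf.continuousOn.sub (by fun_prop)
    · exact (hf.mono interior_subset).sub (by fun_prop)
    · intro s hs
      rw [interior_Icc] at hs
      have hfs : HasDerivAt f (deriv f s) s :=
        (hf.differentiableAt (Icc_mem_nhds hs.1 hs.2)).hasDerivAt
      have hg : HasDerivAt (fun s => f s - β / 2 * (t - s) ^ 2) (deriv f s + β * (t - s)) s := by
        refine (hfs.sub ((((hasDerivAt_id s).const_sub t).pow 2).const_mul (β / 2))).congr_deriv ?_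
        simp only [id]
        ring
      rw [hg.deriv]
      linarith [hv s ⟨hs.1.le, hs.2.le⟩]
  have := hanti ⟨le_rfl, hat⟩ ⟨hat, le_rfl⟩ hat
  simp only [sub_self] at this
  linarith

theorem deriv_nonneg_of_le_deriv_deriv_of_deriv_neg {f : ℝ → ℝ} {a t β : ℝ} (hat : a ≤ t)
    (hf : DifferentiableOn ℝ f (Icc a t)) (hf' : DifferentiableOn ℝ (deriv f) (Icc a t))
    (hβ : 0 < β) (hacc : ∀ s ∈ Ioo a t, deriv f s < 0 → β ≤ deriv (deriv f) s)
    (hft : 0 ≤ f t) (hfa : f a < β / 2 * (t - a) ^ 2) : 0 ≤ deriv f t := by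
  by_contra! hvt
  have hneg := neg_on_Icc_of_neg_right_of_deriv_pos hf'.continuousOn
    (fun s hs hvs => hβ.trans_le (hacc s hs hvs)) hvt
  have := le_sub_half_mul_sq_of_le_deriv_deriv hat hf hf'
    (fun s hs => hacc s hs (hneg s (Ioo_subset_Icc_self hs))) hvt.le
  linarith

theorem TendstoUniformlyOn.exists_pos_eventually_comp_le_neg {ι X Y : Type*}
    [TopologicalSpace X] [PseudoMetricSpace Y] [ProperSpace Y] {l : Filter ι}
    {F : ι → X → Y} {g : X → Y} {K : Set X} {φ : Y → ℝ} (hF : TendstoUniformlyOn F g l K)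
    (hK : IsCompact K) (hg : ContinuousOn g K) (hφ : Continuous φ)
    (hneg : ∀ x ∈ K, φ (g x) < 0) : ∃ β > 0, ∀ᶠ n in l, ∀ x ∈ K, φ (F n x) ≤ -β := by
  have hgK : IsCompact (g '' K) := hK.image_of_continuousOn hg
  obtain ⟨δ, hδ, hδsub⟩ := hgK.exists_cthickening_subset_open (isOpen_Iio.preimage hφ)
    (by rintro _ ⟨x, hx, rfl⟩; exact hneg x hx)
  obtain ⟨β, hβ, hβφ⟩ := hgK.cthickening.exists_forall_le' (f := fun y => -φ y)
    hφ.neg.continuousOn fun y hy => neg_pos.2 (hδsub hy)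
  refine ⟨β, hβ, ?_⟩
  filter_upwards [Metric.tendstoUniformlyOn_iff.1 hF δ hδ] with n hn x hx
  have := hβφ _ (mem_cthickening_of_dist_le _ _ δ _ (mem_image_of_mem g hx)
    (dist_comm (g x) (F n x) ▸ (hn x hx).le))
  linarith

theorem HypB4.neg_of_neg {b : ℝ → ℝ} (hB4 : HypB4 b) {y : ℝ} (hy : y < 0) : b y < 0 := by
  nlinarith [hB4 y hy.ne]

theorem IsGlobalSolution.neg_b_le_deriv_deriv_of_deriv_neg {a μ h0 hd0 ξ0 ξd0 : ℝ}
    {b : ℝ → ℝ} {D : ℝ → ℝ → ℝ} {h ξ : ℝ → ℝ}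
    (hsol : IsGlobalSolution a μ b D h0 hd0 ξ0 ξd0 h ξ) (hμ : 0 < μ) (hD : HypDpos D)
    {s : ℝ} (hs : 0 ≤ s) (hv : deriv h s < 0) : -b (ξ s) ≤ deriv (deriv h) s := by
  have hdrag : 0 < μ * D (h s) (ξ s) := mul_pos hμ (hD _ _ (hsol.1 s hs))
  rw [hsol.2.2.2.1 s hs]
  nlinarith [mul_pos hdrag (neg_pos.2 hv)]

theorem IsGlobalSolution.deriv_nonneg_of_b_le_neg {a μ h0 hd0 ξ0 ξd0 : ℝ}
    {b : ℝ → ℝ} {D : ℝ → ℝ → ℝ} {h ξ : ℝ → ℝ}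
    (hsol : IsGlobalSolution a μ b D h0 hd0 ξ0 ξd0 h ξ) (hμ : 0 < μ) (hD : HypDpos D)
    {s₀ t β : ℝ} (hs₀ : 0 ≤ s₀) (hs₀t : s₀ ≤ t) (hβ : 0 < β)
    (hb : ∀ s ∈ Icc s₀ t, b (ξ s) ≤ -β) (hsmall : h s₀ < β / 2 * (t - s₀) ^ 2) :
    0 ≤ deriv h t := by
  have hdiff := fun s (hs : s ∈ Icc s₀ t) => hsol.2.1 s (hs₀.trans hs.1)
  refine deriv_nonneg_of_le_deriv_deriv_of_deriv_neg hs₀t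
    (fun s hs => (hdiff s hs).1.differentiableWithinAt)
    (fun s hs => (hdiff s hs).2.1.differentiableWithinAt) hβ (fun s hs hvs => ?_)
    (hsol.1 t (hs₀.trans hs₀t)).le hsmall
  linarith [hb s (Ioo_subset_Icc_self hs),
    hsol.neg_b_le_deriv_deriv_of_deriv_neg hμ hD (hs₀.trans hs.1.le) hvs]

theorem rebound_phase_nonneg_velocity_general
    (a h0 hd0 t₁ t₂ : ℝ)
    (b : ℝ → ℝ) (D : ℝ → ℝ → ℝ)
    (μseq : ℕ → ℝ) (h ξ : ℕ → ℝ → ℝ) (ξl : ℝ → ℝ)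
    (hh0 : 0 < h0) (hhd0 : hd0 < 0)
    (hB1 : HypB1 b) (hB4 : HypB4 b)
    (hDpos : HypDpos D)
    (hμpos : ∀ n, 0 < μseq n)
    (hsol : ∀ n, IsGlobalSolution a (μseq n) b D h0 hd0 0 0 (h n) (ξ n))
    (hosc : IsOscSolution a (-h0 / hd0) (-hd0) b ξl)
    (hconvξ : ∀ K : Set ℝ, IsCompact K → K ⊆ Set.Ici 0 →
      TendstoUniformlyOn (fun n t => ξ n t) ξl atTop K)
    (hhpt : ∀ t : ℝ, 0 ≤ t →
      Tendsto (fun n => h n t) atTop (nhds (max 0 (h0 + hd0 * t))))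
    (ht₁ : -h0 / hd0 < t₁)
    (hneg : ∀ t ∈ Set.Ioo t₁ t₂, ξl t < 0) :
    ∀ ε : ℝ, 0 < ε → 6 * ε < t₂ - t₁ →
      ∃ N : ℕ, ∀ n ≥ N, ∀ t ∈ Set.Ioo (t₁ + 3 * ε) (t₂ - 3 * ε),
        0 ≤ deriv (h n) t := by
  intro ε hε hε6
  have ht₀ : 0 < -h0 / hd0 := div_pos_of_neg_of_neg (neg_neg_of_pos hh0) hhd0
  have hK : Icc (t₁ + ε) (t₂ - 3 * ε) ⊆ Ici (-h0 / hd0) :=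
    fun s hs => mem_Ici.2 (by linarith [hs.1])
  have hK0 : Icc (t₁ + ε) (t₂ - 3 * ε) ⊆ Ici 0 := hK.trans (Ici_subset_Ici.2 ht₀.le)
  obtain ⟨β, hβ, hbξ⟩ := (hconvξ _ isCompact_Icc hK0).exists_pos_eventually_comp_le_neg
    isCompact_Icc (hosc.2.2.1.mono hK) hB1.continuous
    fun s hs => hB4.neg_of_neg (hneg s ⟨by linarith [hs.1], by linarith [hs.2]⟩)
  have hwall : h0 + hd0 * (t₁ + ε) ≤ 0 := by
    have := (div_lt_iff_of_neg hhd0).1 (ht₁.trans (lt_add_of_pos_right t₁ hε))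
    linarith
  have hstart : Tendsto (fun n => h n (t₁ + ε)) atTop (nhds 0) := by
    simpa only [max_eq_left hwall] using hhpt _ (hK0 ⟨le_rfl, by linarith⟩)
  obtain ⟨N, hN⟩ := (hbξ.and (hstart.eventually_lt_const
    (by positivity : 0 < β / 2 * (2 * ε) ^ 2))).exists_forall_of_atTop
  refine ⟨N, fun n hn t ht => ?_⟩
  obtain ⟨hbn, hsmall⟩ := hN n hn
  refine (hsol n).deriv_nonneg_of_b_le_neg (hμpos n) hDpos (hK0 ⟨le_rfl, by linarith⟩)
    (by linarith [ht.1]) hβ (fun s hs => hbn s ⟨hs.1, hs.2.trans ht.2.le⟩) ?_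
  calc h n (t₁ + ε) < β / 2 * (2 * ε) ^ 2 := hsmall
    _ ≤ β / 2 * (t - (t₁ + ε)) ^ 2 := by gcongr; linarith [ht.1]

/-- Step 2 of the proof of Theorem 3.3: on any interval `(t₁,t₂) ⊂ (t₀,∞)`
where the limiting oscillation `ξ` is negative, the bodies eventually move away
from the wall: for `ε > 0` with `6ε < t₂ − t₁` and all large `n`,
`ḣ_n ≥ 0` on `(t₁ + 3ε, t₂ − 3ε)`. -/
theorem rebound_phase_nonneg_velocity
    (a h0 hd0 c α δ₁ c₁ γ₁ δ₂ yminus t₁ t₂ : ℝ)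
    (b : ℝ → ℝ) (D : ℝ → ℝ → ℝ) (γfun : ℝ → ℝ)
    (μseq : ℕ → ℝ) (h ξ : ℕ → ℝ → ℝ) (ξl : ℝ → ℝ)
    (ha : 0 < a) (hh0 : 0 < h0) (hhd0 : hd0 < 0)
    (hB1 : HypB1 b) (hB2 : HypB2 b) (hB4 : HypB4 b)
    (hDpos : HypDpos D) (hD1 : HypD1 D) (hD2 : HypD2 D c α)
    (hD4 : HypD4 D) (hD5 : HypD5 D α δ₁ c₁ γ₁) (hD6 : HypD6 D γ₁ δ₂ γfun)
    (hym : yminus < 0) (hymB : 2 * a * potB b yminus = hd0 ^ 2)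
    (hymδ₂ : yminus < -δ₂)
    (hμpos : ∀ n, 0 < μseq n) (hμ0 : Tendsto μseq atTop (nhds 0))
    (hsol : ∀ n, IsGlobalSolution a (μseq n) b D h0 hd0 0 0 (h n) (ξ n))
    (hosc : IsOscSolution a (-h0 / hd0) (-hd0) b ξl)
    (hconvξ : ∀ K : Set ℝ, IsCompact K → K ⊆ Set.Ici 0 →
      TendstoUniformlyOn (fun n t => ξ n t) ξl atTop K)
    (hhpt : ∀ t : ℝ, 0 ≤ t →
      Tendsto (fun n => h n t) atTop (nhds (max 0 (h0 + hd0 * t))))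
    (ht₁ : -h0 / hd0 < t₁) (ht₁₂ : t₁ < t₂)
    (hneg : ∀ t ∈ Set.Ioo t₁ t₂, ξl t < 0) :
    ∀ ε : ℝ, 0 < ε → 6 * ε < t₂ - t₁ →
      ∃ N : ℕ, ∀ n ≥ N, ∀ t ∈ Set.Ioo (t₁ + 3 * ε) (t₂ - 3 * ε),
        0 ≤ deriv (h n) t :=
  rebound_phase_nonneg_velocity_general a h0 hd0 t₁ t₂ b D μseq h ξ ξl hh0 hhd0 hB1 hB4 hDpos hμpos
    hsol hosc hconvξ hhpt ht₁ hneg
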